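/- For A ∈ ℝ, J ∈ ℝ³ and ψ = S^A + S^J one has, for every x ∈ ℝ³∖{0}, the exact identity ‖x‖⁸·Σ_{a,b} ψ(x)_{ab}·ψ(x)_{ab} = 6A²‖x‖² + 18(‖J‖²‖x‖² − ⟨J,x⟩²). In particular ‖x‖⁸ ψ_{ab}ψ^{ab} extends to a polynomial (hence smooth) function on all of ℝ³, so the condition |x|⁸ψ_{ab}ψ^{ab} ∈ E^∞(B_a(i)) of the Dain–Friedrich existence theorem holds for this solution. -/

import Mathlib

open scoped RealInnerProductSpace

/-- The Bowen–York tensor `S^A(x)_{ab} = (A/‖x‖³)(3 xₐ x_b/‖x‖² − δ_{ab})`. -/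
noncomputable def bowenYorkA (A : ℝ) (x : EuclideanSpace ℝ (Fin 3)) (a b : Fin 3) : ℝ :=
  (A / ‖x‖ ^ 3) * (3 * x a * x b / ‖x‖ ^ 2 - if a = b then 1 else 0)

/-- The cross product `J × x` of two vectors of `ℝ³`, componentwise. -/
def crossVec (J x : EuclideanSpace ℝ (Fin 3)) : Fin 3 → ℝ :=
  ![J 1 * x 2 - J 2 * x 1, J 2 * x 0 - J 0 * x 2, J 0 * x 1 - J 1 * x 0]

/-- The Bowen–York angular-momentum tensor
`S^J(x)_{ab} = (3/‖x‖⁵)(xₐ (J×x)_b + x_b (J×x)ₐ)`. -/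
noncomputable def bowenYorkJ (J x : EuclideanSpace ℝ (Fin 3)) (a b : Fin 3) : ℝ :=
  (3 / ‖x‖ ^ 5) * (x a * crossVec J x b + x b * crossVec J x a)

set_option maxHeartbeats 2000000 in
/-- For `A ∈ ℝ`, `J ∈ ℝ³` and `ψ = S^A + S^J` one has, for every `x ≠ 0`, the exact identity
`‖x‖⁸ Σ_{a,b} ψ_{ab} ψ_{ab} = 6A²‖x‖² + 18(‖J‖²‖x‖² − ⟨J,x⟩²)`; in particular
`‖x‖⁸ ψ_{ab}ψ^{ab}` extends to a smooth function on all of `ℝ³`, so the `E^∞` condition of the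
Dain–Friedrich existence theorem holds. -/
theorem stmt_13 (A : ℝ) (J : EuclideanSpace ℝ (Fin 3)) :
    (∀ x : EuclideanSpace ℝ (Fin 3), x ≠ 0 →
      ‖x‖ ^ 8 * ∑ a : Fin 3, ∑ b : Fin 3,
          (bowenYorkA A x a b + bowenYorkJ J x a b) * (bowenYorkA A x a b + bowenYorkJ J x a b)
        = 6 * A ^ 2 * ‖x‖ ^ 2 + 18 * (‖J‖ ^ 2 * ‖x‖ ^ 2 - ⟪J, x⟫ ^ 2)) ∧
    ∃ g : EuclideanSpace ℝ (Fin 3) → ℝ, ContDiff ℝ (⊤ : ℕ∞) g ∧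
      ∀ x : EuclideanSpace ℝ (Fin 3), x ≠ 0 →
        g x = ‖x‖ ^ 8 * ∑ a : Fin 3, ∑ b : Fin 3,
          (bowenYorkA A x a b + bowenYorkJ J x a b)
            * (bowenYorkA A x a b + bowenYorkJ J x a b) := by
  have key : ∀ x : EuclideanSpace ℝ (Fin 3), x ≠ 0 →
      ‖x‖ ^ 8 * ∑ a : Fin 3, ∑ b : Fin 3,
          (bowenYorkA A x a b + bowenYorkJ J x a b) * (bowenYorkA A x a b + bowenYorkJ J x a b)
        = 6 * A ^ 2 * ‖x‖ ^ 2 + 18 * (‖J‖ ^ 2 * ‖x‖ ^ 2 - ⟪J, x⟫ ^ 2) := by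
    intro x hx
    have hn : ‖x‖ ≠ 0 := norm_ne_zero_iff.mpr hx
    have h2 : ‖x‖ ^ 2 = x 0 ^ 2 + x 1 ^ 2 + x 2 ^ 2 := by
      rw [EuclideanSpace.norm_sq_eq]
      simp [Fin.sum_univ_three]
    have hJ : ‖J‖ ^ 2 = J 0 ^ 2 + J 1 ^ 2 + J 2 ^ 2 := by
      rw [EuclideanSpace.norm_sq_eq]
      simp [Fin.sum_univ_three]
    have hin : ⟪J, x⟫ = J 0 * x 0 + J 1 * x 1 + J 2 * x 2 := by
      simp [PiLp.inner_apply, Fin.sum_univ_three]; ring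
    simp only [bowenYorkA, bowenYorkJ, crossVec, Fin.sum_univ_three, hin, hJ,
      Matrix.cons_val_zero, Matrix.cons_val_one, Matrix.head_cons, Matrix.cons_val_two,
      Matrix.tail_cons]
    norm_num [Fin.ext_iff]
    linear_combination (norm := (field_simp; ring))
      (-3*A^2*(3*(x 0^2+x 1^2+x 2^2) + ‖x‖^2)/‖x‖^2
       - 18*((J 0^2+J 1^2+J 2^2)*((x 0^2+x 1^2+x 2^2)+‖x‖^2)
             - (J 0*x 0+J 1*x 1+J 2*x 2)^2)/‖x‖^2) * h2
  refine ⟨key, fun x => 6 * A ^ 2 * ‖x‖ ^ 2 + 18 * (‖J‖ ^ 2 * ‖x‖ ^ 2 - ⟪J, x⟫ ^ 2), ?_, ?_⟩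
  · have h1 : ContDiff ℝ (⊤ : ℕ∞) fun x : EuclideanSpace ℝ (Fin 3) => ‖x‖ ^ 2 := by
      simpa using contDiff_norm_sq ℝ (E := EuclideanSpace ℝ (Fin 3)) (n := (⊤ : ℕ∞))
    have h3 : ContDiff ℝ (⊤ : ℕ∞) fun x : EuclideanSpace ℝ (Fin 3) => ⟪J, x⟫ :=
      (contDiff_const (c := J)).inner ℝ contDiff_id
    exact (contDiff_const.mul h1).add
      (contDiff_const.mul ((contDiff_const.mul h1).sub (h3.pow 2)))
  · intro x hx
    rw [key x hx]
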